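/- Let rank be the function from commands to finite multisets of naturals defined by: rank(while c do skip) = {deg(c)+2}, rank(whiledec n c) = n·{deg(c)+1}, rank(fork c) = rank(c), rank(let x := c in c') = rank(c) + rank(c'), rank(if c then c') = rank(c) + rank(c'), rank = ∅ otherwise. Then for every n ≥ 1 and every command c, {deg(c)} + (n−1)·{deg(c)+1} <_DM n·{deg(c)+1} in the Dershowitz–Manna ordering. -/
import Mathlib

/-- Commands of the (extended) language. -/
inductive Cmd where
  | atom : Cmd
  | whileSkip : Cmd → Cmd
  | whiledec : ℕ → Cmd → Cmd
  | awaitStarted : Finset ℕ → ℕ → Cmd → Cmd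
  | fork : Cmd → Cmd
  | letIn : Cmd → Cmd → Cmd
  | ifThen : Cmd → Cmd → Cmd

/-- The degree of a command. -/
def deg : Cmd → ℕ
  | .whileSkip c => deg c + 2
  | .whiledec _ c => deg c + 1
  | .awaitStarted _ _ c => deg c + 1
  | .fork c => deg c
  | .letIn c c' => max (deg c) (deg c')
  | .ifThen c c' => max (deg c) (deg c')
  | _ => 0

/-- The rank of a command, as a finite multiset of degrees. -/
def rank : Cmd → Multiset ℕ
  | .whileSkip c => {deg (Cmd.whileSkip c)}
  | .whiledec n c => Multiset.replicate n (deg (Cmd.whiledec n c))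
  | .fork c => rank c
  | .letIn c c' => rank c + rank c'
  | .ifThen c c' => rank c + rank c'
  | _ => 0

/-- The Dershowitz–Manna ordering on finite multisets over ℕ. -/
def DMLT (A B : Multiset ℕ) : Prop :=
  ∃ C D : Multiset ℕ, C ≠ 0 ∧ C ≤ B ∧ A = B - C + D ∧ ∀ d ∈ D, ∃ c ∈ C, d < c

/-- Unfolding one iteration of a started decrease loop strictly decreases the rank:
`{deg c} + (n−1)·{deg c + 1} <_DM n·{deg c + 1}`. -/
theorem rank_whiledec_decreases (n : ℕ) (hn : 1 ≤ n) (c : Cmd) :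
    DMLT ({deg c} + Multiset.replicate (n - 1) (deg c + 1))
      (Multiset.replicate n (deg c + 1)) := by
  refine ⟨{deg c + 1}, {deg c}, by simp, ?_, ?_, ?_⟩
  · rw [← Multiset.replicate_one (deg c + 1)]
    exact Multiset.replicate_le_replicate _ |>.2 hn
  · rw [add_comm]
    congr 1
    ext a
    rw [Multiset.count_sub]
    simp [Multiset.count_replicate]
    split <;> simp_all
  · intro d hd
    simp at hd
    exact ⟨deg c + 1, by simp, by simp [hd]⟩
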